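/- arXiv:1508.02800 — 3 statements merged into one kernel-verified Lean document; each statement's English description precedes it below -/
import Mathlib

section
/- Let (R, 𝔪) be a Noetherian local ring and I an ideal of R such that R/I has finite length. Then the number of irreducible ideals appearing in an irredundant irreducible decomposition of I equals the length of the R-module (I :_R 𝔪)/I. -/
open IsLocalRing

/-- Length of an `R`-module, as the Krull dimension of its submodule lattice. -/
noncomputable def mLen (R M : Type*) [CommRing R] [AddCommGroup M] [Module R M] : ℕ∞ :=
  WithBot.unbotD 0 (Order.krullDim (Submodule R M))

/-- The quotient `B/A` of two submodules of a module. -/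
abbrev subQuot {R M : Type*} [CommRing R] [AddCommGroup M] [Module R M]
    (A B : Submodule R M) := (↥B) ⧸ (A.comap B.subtype)

/-- An ideal is irreducible if it is not the intersection of two strictly larger ideals,
i.e. whenever it is written as an intersection of two ideals it equals one of them. -/
def IrreducibleIdeal {R : Type*} [CommRing R] (J : Ideal R) : Prop :=
  ∀ A B : Ideal R, J = A ⊓ B → J = A ∨ J = B

open Module in
/-- aux: over a field, `mLen` is the finrank. -/
lemma mLen_eq_finrank (K V : Type*) [Field K] [AddCommGroup V] [Module K V]
    [FiniteDimensional K V] : mLen K V = (finrank K V : ℕ∞) := by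
  have hle : ∀ p : LTSeries (Submodule K V), p.length ≤ finrank K V := by
    intro p
    have key : ∀ i : Fin (p.length + 1), (i : ℕ) ≤ finrank K (p i) := by
      intro i
      induction i using Fin.induction with
      | zero => simp
      | succ i ih =>
        have h1 : finrank K (p i.castSucc) < finrank K (p i.succ) :=
          Submodule.finrank_lt_finrank_of_lt (p.strictMono (Fin.castSucc_lt_succ (i := i)))
        have h2 : ((i.castSucc : Fin (p.length+1)) : ℕ) = (i : ℕ) := rfl
        have h3 : ((i.succ : Fin (p.length+1)) : ℕ) = (i : ℕ) + 1 := rfl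
        omega
    have h4 := key (Fin.last _)
    have h5 : finrank K (p (Fin.last _)) ≤ finrank K V := Submodule.finrank_le _
    simpa using h4.trans h5
  have hkd : Order.krullDim (Submodule K V) = ((finrank K V : ℕ∞) : WithBot ℕ∞) := by
    apply le_antisymm
    · rw [Order.krullDim_eq_iSup_length]
      exact WithBot.coe_le_coe.mpr (iSup_le fun p => by exact_mod_cast hle p)
    · let b := Module.finBasis K V
      let p : LTSeries (Submodule K V) :=
        ⟨finrank K V, fun i => b.flag i, fun i => b.flag_strictMono (Fin.castSucc_lt_succ (i := i))⟩
      simpa using Order.LTSeries.length_le_krullDim p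
  rw [mLen, hkd]
  rfl

/-- aux: for a surjective algebra map, `A`-submodules and `R`-submodules coincide. -/
def restrictScalarsOrderIso (R A M : Type*) [CommSemiring R] [Semiring A] [Algebra R A]
    [AddCommMonoid M] [Module R M] [Module A M] [IsScalarTower R A M]
    (hsurj : Function.Surjective (algebraMap R A)) :
    Submodule A M ≃o Submodule R M :=
  { Submodule.restrictScalarsEmbedding R A M with
    invFun := fun p ↦
      { carrier := p
        add_mem' := add_mem
        zero_mem' := p.zero_mem
        smul_mem' := by
          intro c x hx
          obtain ⟨a, rfl⟩ := hsurj c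
          rw [algebraMap_smul]
          exact p.smul_mem a hx }
    left_inv := fun _ ↦ by ext; simp [Submodule.restrictScalarsEmbedding]
    right_inv := fun _ ↦ by ext; simp [Submodule.restrictScalarsEmbedding] }

open Module in
/-- aux: counting coatoms in an irredundant decomposition of `⊥` in a vector space. -/
lemma card_eq_finrank_of_coatoms {K V : Type*} [Field K] [AddCommGroup V] [Module K V]
    [FiniteDimensional K V] (n : ℕ) (U : Fin n → Submodule K V)
    (hco : ∀ i, IsCoatom (U i)) (hinf : ⨅ i, U i = ⊥)
    (hirr : ∀ i : Fin n, (⨅ j ∈ Finset.univ.erase i, U j) ≠ ⊥) :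
    n = finrank K V := by
  classical
  have hf : ∀ i, ∃ f : V →ₗ[K] K, LinearMap.ker f = U i := by
    intro i
    haveI hsimple : IsSimpleModule K (V ⧸ U i) := isSimpleModule_iff_isCoatom.mpr (hco i)
    haveI : Nontrivial (V ⧸ U i) := Submodule.Quotient.nontrivial_iff.mpr (hco i).1
    have hone : finrank K (V ⧸ U i) = 1 := by
      obtain ⟨v, hv⟩ := exists_ne (0 : V ⧸ U i)
      refine finrank_eq_one v hv fun w => ?_
      have hspan : Submodule.span K {v} = ⊤ := by
        rcases eq_bot_or_eq_top (Submodule.span K {v}) with h | h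
        · exact absurd (Submodule.span_eq_bot.mp h v rfl) hv
        · exact h
      have : w ∈ Submodule.span K {v} := hspan ▸ Submodule.mem_top
      obtain ⟨c, hc⟩ := Submodule.mem_span_singleton.mp this
      exact ⟨c, hc⟩
    let e : (V ⧸ U i) ≃ₗ[K] K := LinearEquiv.ofFinrankEq _ _ (by rw [hone, finrank_self])
    refine ⟨e.toLinearMap ∘ₗ (U i).mkQ, ?_⟩
    rw [LinearMap.ker_comp, LinearEquiv.ker, Submodule.comap_bot, Submodule.ker_mkQ]
  choose f hker using hf
  have hvanish : ∀ (s : Set (Fin n)) (g : Module.Dual K V),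
      g ∈ Submodule.span K (f '' s) → ∀ x : V, (∀ j ∈ s, x ∈ U j) → g x = 0 := by
    intro s g hg x hx
    induction hg using Submodule.span_induction with
    | mem g hgmem =>
      obtain ⟨j, hj, rfl⟩ := hgmem
      have : x ∈ LinearMap.ker (f j) := (hker j) ▸ hx j hj
      exact this
    | zero => rfl
    | add g₁ g₂ _ _ h1 h2 => simp [LinearMap.add_apply, h1, h2]
    | smul c g _ h => simp [LinearMap.smul_apply, h]
  have hli : LinearIndependent K f := by
    rw [linearIndependent_iff_notMem_span]
    intro i hmem
    apply hirr i
    rw [eq_bot_iff]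
    intro x hx
    have hxj : ∀ j : Fin n, j ≠ i → x ∈ U j := by
      intro j hj
      simp only [Submodule.mem_iInf] at hx
      exact hx j (Finset.mem_erase.mpr ⟨hj, Finset.mem_univ j⟩)
    have hxi : x ∈ U i := by
      have h0 : f i x = 0 := hvanish (Set.univ \ {i}) (f i) hmem x
        (fun j hj => hxj j (by simpa using hj.2))
      rw [← hker i]; exact h0
    have : x ∈ ⨅ j, U j := Submodule.mem_iInf _ |>.mpr fun j => by
      by_cases hji : j = i
      · exact hji ▸ hxi
      · exact hxj j hji
    rw [hinf] at this
    exact this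
  have hle1 : n ≤ finrank K V := by
    have := hli.fintype_card_le_finrank
    rwa [Fintype.card_fin, Subspace.dual_finrank_eq] at this
  have hcoann : (Submodule.span K (Set.range f)).dualCoannihilator = ⊥ := by
    rw [eq_bot_iff]
    intro v hv
    rw [Submodule.mem_dualCoannihilator] at hv
    have : v ∈ ⨅ j, U j := Submodule.mem_iInf _ |>.mpr fun j => by
      rw [← hker j]
      exact hv (f j) (Submodule.subset_span ⟨j, rfl⟩)
    rwa [hinf] at this
  have H : finrank K (Submodule.span K (Set.range f))
      + finrank K (Submodule.span K (Set.range f)).dualCoannihilator = finrank K V :=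
    Subspace.finrank_add_finrank_dualCoannihilator_eq _
  rw [hcoann] at H
  have hVle : finrank K V ≤ finrank K (Submodule.span K (Set.range f)) := by
    rw [finrank_bot] at H
    omega
  have h3 : finrank K (Submodule.span K (Set.range f)) ≤ n := by
    refine le_trans (finrank_span_le_card _) ?_
    rw [Set.toFinset_range]
    exact Finset.card_image_le.trans (by simp)
  exact le_antisymm hle1 (le_trans hVle h3)

/-- aux: every ideal strictly containing `I` meets the socle `(I : 𝔪)` outside `I`. -/
lemma exists_socle_mem {R : Type*} [CommRing R] [IsLocalRing R] (I T : Ideal R)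
    (hart : IsArtinian R (R ⧸ I)) (hIT : I ≤ T) (hne : T ≠ I) :
    ∃ s, s ∈ T ∧ s ∈ I.colon (maximalIdeal R) ∧ s ∉ I := by
  classical
  haveI : IsAtomic (Submodule R (R ⧸ I)) :=
    isAtomic_of_orderBot_wellFounded_lt (IsWellFounded.wf)
  set T' : Submodule R (R ⧸ I) := Submodule.map I.mkQ T with hT'
  have hT'ne : T' ≠ ⊥ := by
    intro h
    apply hne
    refine le_antisymm ?_ hIT
    intro t ht
    have : I.mkQ t ∈ T' := Submodule.mem_map_of_mem ht
    rw [h, Submodule.mem_bot] at this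
    rwa [Submodule.mkQ_apply, Submodule.Quotient.mk_eq_zero] at this
  obtain ⟨a, ha, haT⟩ := (IsAtomic.eq_bot_or_exists_atom_le T').resolve_left hT'ne
  haveI hs : IsSimpleModule R a := isSimpleModule_iff_isAtom.mpr ha
  have hann : Module.annihilator R a = maximalIdeal R :=
    IsLocalRing.eq_maximalIdeal (IsSimpleModule.annihilator_isMaximal)
  haveI : Nontrivial a := Submodule.nontrivial_iff_ne_bot.mpr ha.1
  obtain ⟨⟨x, hxa⟩, hx0⟩ := exists_ne (0 : a)
  have hxT' : x ∈ T' := haT hxa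
  obtain ⟨s, hsT, hsx⟩ := hxT'
  refine ⟨s, hsT, ?_, ?_⟩
  · rw [Submodule.mem_colon]
    intro m hm
    have hmann : m ∈ Module.annihilator R a := hann ▸ hm
    have := (Module.mem_annihilator).mp hmann ⟨x, hxa⟩
    have hmx : m • x = 0 := by
      have := congrArg (Subtype.val) this
      simpa using this
    have : I.mkQ (m • s) = 0 := by
      rw [map_smul, hsx]; exact hmx
    rw [Submodule.mkQ_apply, Submodule.Quotient.mk_eq_zero] at this
    rwa [smul_eq_mul, mul_comm, ← smul_eq_mul] at this
  · intro hsI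
    apply hx0
    have : I.mkQ s = 0 := by
      rw [Submodule.mkQ_apply, Submodule.Quotient.mk_eq_zero]; exact hsI
    ext
    simp [← hsx, this]

/-- aux: key property of an irreducible ideal in a local ring. -/
lemma mem_sup_span_of_irred {R : Type*} [CommRing R] [IsLocalRing R]
    {I Q : Ideal R} (hQ : IrreducibleIdeal Q) (hIQ : I ≤ Q)
    {s t : R} (hs : s ∈ I.colon (maximalIdeal R)) (hsQ : s ∉ Q)
    (ht : t ∈ I.colon (maximalIdeal R)) :
    t ∈ Q ⊔ Ideal.span {s} := by
  by_contra htA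
  have hsocle : ∀ x ∈ I.colon (maximalIdeal R), ∀ a : R, ¬ IsUnit a → a * x ∈ Q := by
    intro x hx a hau
    have ham : a ∈ maximalIdeal R := hau
    have : x • a ∈ I := Submodule.mem_colon.mp hx a ham
    rw [smul_eq_mul, mul_comm] at this
    exact hIQ this
  have hAB : Q = (Q ⊔ Ideal.span {s}) ⊓ (Q ⊔ Ideal.span {t}) := by
    apply le_antisymm (le_inf le_sup_left le_sup_left)
    intro x hx
    obtain ⟨hxA, hxB⟩ := Submodule.mem_inf.mp hx
    obtain ⟨q, hq, u, hu, hxu⟩ := Submodule.mem_sup.mp hxA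
    obtain ⟨a, rfl⟩ := Ideal.mem_span_singleton'.mp hu
    obtain ⟨q', hq', v, hv, hxv⟩ := Submodule.mem_sup.mp hxB
    obtain ⟨b, rfl⟩ := Ideal.mem_span_singleton'.mp hv
    by_cases hau : IsUnit a
    · by_cases hbu : IsUnit b
      · exfalso
        apply htA
        have hbt : b * t = q - q' + a * s := by
          rw [← hxu] at hxv
          linear_combination hxv
        have hmem : q - q' + a * s ∈ Q ⊔ Ideal.span {s} :=
          Submodule.add_mem _ (Submodule.mem_sup_left (Submodule.sub_mem _ hq hq'))
            (Submodule.mem_sup_right (Ideal.mem_span_singleton'.mpr ⟨a, rfl⟩))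
        exact (Ideal.unit_mul_mem_iff_mem _ hbu).mp (hbt ▸ hmem)
      · exfalso
        apply hsQ
        have hbtQ : b * t ∈ Q := hsocle t ht b hbu
        have hasQ : a * s ∈ Q := by
          have hx' : x ∈ Q := by
            have : x = q' + b * t := hxv.symm
            rw [this]; exact Submodule.add_mem _ hq' hbtQ
          rw [show a * s = x - q from by rw [← hxu]; ring]
          exact Submodule.sub_mem _ hx' hq
        exact (Ideal.unit_mul_mem_iff_mem _ hau).mp hasQ
    · have : a * s ∈ Q := hsocle s hs a hau
      rw [← hxu]
      exact Submodule.add_mem _ hq this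
  rcases hQ _ _ hAB with h | h
  · apply hsQ
    rw [h]
    exact Submodule.mem_sup_right (Ideal.mem_span_singleton_self s)
  · apply htA
    have htQ : t ∈ Q := by
      rw [h]
      exact Submodule.mem_sup_right (Ideal.mem_span_singleton_self t)
    exact Submodule.mem_sup_left htQ

/-- if `(R, 𝔪)` is a Noetherian local ring and `I` an ideal with `R/I` of finite
length, then the number of irreducible ideals appearing in any irredundant irreducible
decomposition of `I` equals `ℓ_R((I : 𝔪)/I)`. -/
theorem stmt0 {R : Type*} [CommRing R] [IsNoetherianRing R] [IsLocalRing R]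
    (I : Ideal R) (hI : IsFiniteLength R (R ⧸ I))
    (n : ℕ) (Q : Fin n → Ideal R)
    (hirr : ∀ i, IrreducibleIdeal (Q i))
    (hdec : I = ⨅ i, Q i)
    (hirred : ∀ j : Fin n, (⨅ i ∈ Finset.univ.erase j, Q i) ≠ I) :
    (n : ℕ∞) = mLen R (subQuot I (I.colon (maximalIdeal R))) := by
  classical
  set S : Ideal R := I.colon (maximalIdeal R) with hSdef
  have hIS : I ≤ S := fun x hx => Submodule.mem_colon.mpr fun p _ => by
    rw [smul_eq_mul]; exact Ideal.mul_mem_right p I hx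
  have hIQ : ∀ i, I ≤ Q i := fun i => le_trans (le_of_eq hdec) (iInf_le Q i)
  let π : ↥S →ₗ[R] subQuot I S := (Submodule.comap S.subtype I).mkQ
  have hπsurj : Function.Surjective π := Submodule.mkQ_surjective _
  have hπ0 : ∀ x : ↥S, π x = 0 ↔ (x : R) ∈ I := by
    intro x
    rw [Submodule.mkQ_apply, Submodule.Quotient.mk_eq_zero]
    exact Iff.rfl
  let U : Fin n → Submodule R (subQuot I S) := fun i => Submodule.map π (Submodule.comap S.subtype (Q i))
  have hUmem : ∀ (i : Fin n) (x : ↥S), π x ∈ U i ↔ (x : R) ∈ Q i := by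
    intro i x
    constructor
    · rintro ⟨y, hy, hyx⟩
      have h0 : π (x - y) = 0 := by rw [map_sub, hyx, sub_self]
      have hxy : ((x : R) - (y : R)) ∈ I := by
        have := (hπ0 _).mp h0
        simpa using this
      have hyQ : (y : R) ∈ Q i := hy
      have : (x : R) - y + y ∈ Q i := Submodule.add_mem _ (hIQ i hxy) hyQ
      simpa using this
    · exact fun h => ⟨x, h, rfl⟩
  have tors : Module.IsTorsionBySet R (subQuot I S) ((maximalIdeal R : Ideal R) : Set R) := by
    intro x a
    obtain ⟨y, rfl⟩ := hπsurj x
    rw [← map_smul]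
    refine (hπ0 _).mpr ?_
    have h1 : (y : R) • (a : R) ∈ I := Submodule.mem_colon.mp y.2 a a.2
    have h2 : ((a : R) • y : ↥S) = (⟨(a : R) * (y : R), ((a : R) • y : ↥S).2⟩ : ↥S) := rfl
    rw [smul_eq_mul, mul_comm] at h1
    simpa using h1
  letI kMod : Module (R ⧸ maximalIdeal R) (subQuot I S) := tors.module
  letI : IsScalarTower R (R ⧸ maximalIdeal R) (subQuot I S) :=
    Module.IsTorsionBySet.isScalarTower tors
  haveI hmmax : (maximalIdeal R).IsMaximal := maximalIdeal.isMaximal R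
  letI : Field (R ⧸ maximalIdeal R) := Ideal.Quotient.field (maximalIdeal R)
  haveI : Module.Finite R ↥S := Module.Finite.iff_fg.mpr (IsNoetherian.noetherian S)
  haveI : Module.Finite R (subQuot I S) := Module.Finite.of_surjective π hπsurj
  haveI : Module.Finite (R ⧸ maximalIdeal R) (subQuot I S) :=
    Module.Finite.of_restrictScalars_finite R (R ⧸ maximalIdeal R) _
  have hsurj : Function.Surjective (algebraMap R (R ⧸ maximalIdeal R)) := by
    rw [Ideal.Quotient.algebraMap_eq]; exact Ideal.Quotient.mk_surjective
  let e : Submodule (R ⧸ maximalIdeal R) (subQuot I S) ≃o Submodule R (subQuot I S) :=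
    restrictScalarsOrderIso R (R ⧸ maximalIdeal R) _ hsurj
  let U' : Fin n → Submodule (R ⧸ maximalIdeal R) (subQuot I S) := fun i => e.symm (U i)
  have heU : ∀ i, e (U' i) = U i := fun i => e.apply_symm_apply _
  have hmemU' : ∀ (i : Fin n) (x : subQuot I S), x ∈ U' i ↔ x ∈ U i := fun i x => Iff.rfl
  -- R-side facts
  have hinfR : (⨅ i, U i) = ⊥ := by
    rw [eq_bot_iff]
    intro x hx
    obtain ⟨y, rfl⟩ := hπsurj x
    have hyQ : ∀ i, (y : R) ∈ Q i := fun i => (hUmem i y).mp ((Submodule.mem_iInf _).mp hx i)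
    have hyI : (y : R) ∈ I := by
      rw [hdec]
      exact (Submodule.mem_iInf _).mpr hyQ
    have : π y = 0 := (hπ0 y).mpr hyI
    simp [this]
  have hart : IsArtinian R (R ⧸ I) := (isFiniteLength_iff_isNoetherian_isArtinian.mp hI).2
  have hwit : ∀ i : Fin n, ∃ x : subQuot I S, x ≠ 0 ∧ x ∉ U i ∧ ∀ j, j ≠ i → x ∈ U j := by
    intro i
    have hIT : I ≤ ⨅ j ∈ Finset.univ.erase i, Q j := le_iInf fun j => le_iInf fun _ => hIQ j
    obtain ⟨s, hsT, hsS, hsI⟩ :=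
      exists_socle_mem I (⨅ j ∈ Finset.univ.erase i, Q j) hart hIT (hirred i)
    simp only [Submodule.mem_iInf] at hsT
    refine ⟨π ⟨s, hsS⟩, ?_, ?_, ?_⟩
    · intro h; exact hsI ((hπ0 _).mp h)
    · intro h
      have hsQi : s ∈ Q i := (hUmem i _).mp h
      apply hsI
      rw [hdec]
      refine (Submodule.mem_iInf _).mpr fun j => ?_
      by_cases hj : j = i
      · exact hj ▸ hsQi
      · exact hsT j (Finset.mem_erase.mpr ⟨hj, Finset.mem_univ _⟩)
    · intro j hj
      exact (hUmem j _).mpr (hsT j (Finset.mem_erase.mpr ⟨hj, Finset.mem_univ _⟩))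
  have hcoat : ∀ i, IsCoatom (U i) := by
    intro i
    obtain ⟨x, hx0, hxU, hxall⟩ := hwit i
    constructor
    · intro htop; exact hxU (htop ▸ Submodule.mem_top)
    · intro V hV
      obtain ⟨u, huV, huU⟩ := SetLike.exists_of_lt hV
      obtain ⟨su, rfl⟩ := hπsurj u
      have hsuQ : (su : R) ∉ Q i := fun h => huU ((hUmem i su).mpr h)
      rw [eq_top_iff]
      intro w _
      obtain ⟨t, rfl⟩ := hπsurj w
      have hts := mem_sup_span_of_irred (hirr i) (hIQ i) su.2 hsuQ t.2
      obtain ⟨q, hq, v, hv, hqv⟩ := Submodule.mem_sup.mp hts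
      obtain ⟨a, rfl⟩ := Ideal.mem_span_singleton'.mp hv
      have hqS : q ∈ S := by
        have hq' : q = (t : R) - a * su := by rw [← hqv]; ring
        rw [hq']
        refine Submodule.sub_mem _ t.2 ?_
        have := Submodule.smul_mem (M := R) S a su.2
        simpa using this
      have ht' : (t : ↥S) = ⟨q, hqS⟩ + a • su := by
        ext
        simp only [Submodule.coe_add, SetLike.val_smul, smul_eq_mul]
        rw [← hqv]
      rw [ht', map_add, map_smul]
      exact V.add_mem (le_of_lt hV ((hUmem i _).mpr hq)) (V.smul_mem a huV)
  -- transfer to the residue field side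
  have hcoat' : ∀ i, IsCoatom (U' i) := fun i =>
    (OrderIso.isCoatom_iff e (U' i)).mp (by rw [heU i]; exact hcoat i)
  have hinf' : (⨅ i, U' i) = ⊥ := by
    rw [eq_bot_iff]
    intro x hx
    have : x ∈ ⨅ i, U i :=
      (Submodule.mem_iInf _).mpr fun i => (hmemU' i x).mp ((Submodule.mem_iInf _).mp hx i)
    rw [hinfR] at this
    simpa using this
  have hirr' : ∀ i : Fin n, (⨅ j ∈ Finset.univ.erase i, U' j) ≠ ⊥ := by
    intro i h
    obtain ⟨x, hx0, hxU, hxall⟩ := hwit i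
    have : x ∈ ⨅ j ∈ Finset.univ.erase i, U' j := by
      simp only [Submodule.mem_iInf]
      intro j hj
      exact (hmemU' j x).mpr (hxall j (Finset.mem_erase.mp hj).1)
    rw [h, Submodule.mem_bot] at this
    exact hx0 this
  have hcount : n = Module.finrank (R ⧸ maximalIdeal R) (subQuot I S) :=
    card_eq_finrank_of_coatoms n U' hcoat' hinf' hirr'
  have h1 : mLen R (subQuot I S) = mLen (R ⧸ maximalIdeal R) (subQuot I S) := by
    rw [mLen, mLen, Order.krullDim_eq_of_orderIso e]
  rw [h1, mLen_eq_finrank, ← hcount]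
end

section
/- Let (R, 𝔪) be a Noetherian local ring, M a finitely generated R-module with dimension filtration D₀ = 0 ⊊ D₁ ⊊ ⋯ ⊊ D_ℓ = M. Then for each 1 ≤ i ≤ ℓ, Ass_R(D_i/D_{i-1}) = { 𝔭 ∈ Ass_R M : dim R/𝔭 = d_i }, where d_i = dim D_i. -/
open IsLocalRing

/-- Krull dimension of a module, i.e. of `R` modulo its annihilator. -/
noncomputable def dimMod (R : Type*) [CommRing R] (M : Type*) [AddCommGroup M] [Module R M] :
    WithBot ℕ∞ := ringKrullDim (R ⧸ Module.annihilator R M)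

/-- `D 0 = 0 ⊊ D 1 ⊊ ⋯ ⊊ D ℓ = M` is the dimension filtration of `M`: each `D i` is the
largest submodule of `D (i+1)` of strictly smaller dimension. -/
def IsDimFiltration {R M : Type*} [CommRing R] [AddCommGroup M] [Module R M]
    (ℓ : ℕ) (D : ℕ → Submodule R M) : Prop :=
  D 0 = ⊥ ∧ D ℓ = ⊤ ∧ (∀ i < ℓ, D i < D (i + 1)) ∧
    (∀ i < ℓ, dimMod R ↥(D i) < dimMod R ↥(D (i + 1))) ∧
    (∀ i < ℓ, ∀ L : Submodule R M, L ≤ D (i + 1) →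
      dimMod R ↥L < dimMod R ↥(D (i + 1)) → L ≤ D i)

section Aux

open Order in
lemma aux_chain {R : Type*} [CommRing R] {I K : Ideal R}
    (c : LTSeries (PrimeSpectrum (R ⧸ K)))
    (hI : ∀ k, I ≤ ((c k).asIdeal.comap (Ideal.Quotient.mk K))) :
    (c.length : WithBot ℕ∞) ≤ ringKrullDim (R ⧸ I) := by
  have hprime : ∀ k : Fin (c.length + 1),
      Ideal.IsPrime (Ideal.map (Ideal.Quotient.mk I)
        ((c k).asIdeal.comap (Ideal.Quotient.mk K))) := fun k =>
    Ideal.map_isPrime_of_surjective Ideal.Quotient.mk_surjective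
      (by rw [Ideal.mk_ker]; exact hI k)
  let c' : LTSeries (PrimeSpectrum (R ⧸ I)) :=
    ⟨c.length, fun k => ⟨_, hprime k⟩, ?_⟩
  · exact Order.LTSeries.length_le_krullDim c'
  · intro k
    have hlt : (c k.castSucc).asIdeal.comap (Ideal.Quotient.mk K)
        < (c k.succ).asIdeal.comap (Ideal.Quotient.mk K) := by
      refine lt_of_le_of_ne (Ideal.comap_mono (c.step k).le) fun h => ?_
      exact (c.step k).ne (PrimeSpectrum.ext
        (Ideal.comap_injective_of_surjective _ Ideal.Quotient.mk_surjective h))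
    show Ideal.map (Ideal.Quotient.mk I) _ < Ideal.map (Ideal.Quotient.mk I) _
    refine lt_of_le_of_ne (Ideal.map_mono hlt.le) fun h => hlt.ne ?_
    have hrec : ∀ k : Fin (c.length + 1), Ideal.comap (Ideal.Quotient.mk I)
        (Ideal.map (Ideal.Quotient.mk I) ((c k).asIdeal.comap (Ideal.Quotient.mk K)))
        = (c k).asIdeal.comap (Ideal.Quotient.mk K) := fun k => by
      rw [Ideal.comap_map_of_surjective _ Ideal.Quotient.mk_surjective,
        ← RingHom.ker_eq_comap_bot, Ideal.mk_ker, sup_eq_left.mpr (hI k)]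
    rw [← hrec k.castSucc, ← hrec k.succ, h]

open Order in
lemma krull_quot_le_max {R : Type*} [CommRing R] {I J K : Ideal R} (h : I * J ≤ K) :
    ringKrullDim (R ⧸ K) ≤ max (ringKrullDim (R ⧸ I)) (ringKrullDim (R ⧸ J)) := by
  show krullDim (PrimeSpectrum (R ⧸ K)) ≤ _
  rw [krullDim]
  apply iSup_le
  intro c
  have hK : ∀ k, K ≤ ((c k).asIdeal.comap (Ideal.Quotient.mk K)) := fun k r hr => by
    simp only [Ideal.mem_comap, Ideal.Quotient.eq_zero_iff_mem.mpr hr]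
    exact (c k).asIdeal.zero_mem
  have h0 : I * J ≤ (c 0).asIdeal.comap (Ideal.Quotient.mk K) := h.trans (hK 0)
  rcases (Ideal.IsPrime.mul_le inferInstance).mp h0 with hI | hJ
  · exact le_trans (aux_chain c fun k => hI.trans
      (Ideal.comap_mono (c.monotone (Fin.zero_le k)))) (le_max_left _ _)
  · exact le_trans (aux_chain c fun k => hJ.trans
      (Ideal.comap_mono (c.monotone (Fin.zero_le k)))) (le_max_right _ _)

lemma krull_quot_mono {R : Type*} [CommRing R] {I J : Ideal R} (h : I ≤ J) :
    ringKrullDim (R ⧸ J) ≤ ringKrullDim (R ⧸ I) :=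
  ringKrullDim_le_of_surjective (Ideal.Quotient.factor h) (fun y => by
    obtain ⟨r, rfl⟩ := Ideal.Quotient.mk_surjective y
    exact ⟨Ideal.Quotient.mk I r, Ideal.Quotient.factor_mk h r⟩)

variable {R M : Type*} [CommRing R] [AddCommGroup M] [Module R M]

lemma dimMod_submodule_eq (N : Submodule R M) :
    dimMod R ↥N = ringKrullDim (R ⧸ N.annihilator) := rfl

lemma dimMod_mono {N P : Submodule R M} (h : N ≤ P) :
    dimMod R ↥N ≤ dimMod R ↥P :=
  krull_quot_mono (Submodule.annihilator_mono h)

lemma ann_mul_le (A : Submodule R M) (x : M) (J : Ideal R)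
    (hx : ∀ r ∈ J, r • x ∈ A) :
    A.annihilator * J ≤ (A ⊔ R ∙ x).annihilator := by
  rw [Ideal.mul_le]
  intro a ha b hb
  rw [Submodule.mem_annihilator]
  intro n hn
  obtain ⟨y, hy, z, hz, rfl⟩ := Submodule.mem_sup.mp hn
  obtain ⟨r, rfl⟩ := Submodule.mem_span_singleton.mp hz
  have h1 : (a * b) • y = 0 := by
    rw [mul_smul]
    exact Submodule.mem_annihilator.mp ha _ (A.smul_mem b hy)
  have h2 : (a * b) • (r • x) = 0 := by
    rw [mul_smul, smul_comm b r]
    exact Submodule.mem_annihilator.mp ha _ (A.smul_mem r (hx b hb))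
  rw [smul_add, h1, h2, add_zero]

lemma dim_sup_le {A : Submodule R M} {x : M} {J : Ideal R}
    (hx : ∀ r ∈ J, r • x ∈ A) :
    dimMod R ↥(A ⊔ R ∙ x) ≤ max (dimMod R ↥A) (ringKrullDim (R ⧸ J)) :=
  krull_quot_le_max (ann_mul_le A x J hx)

lemma colon_bot_singleton_eq (x : M) :
    (⊥ : Submodule R M).colon {x} = (R ∙ x).annihilator := by
  ext r
  rw [Submodule.mem_colon_singleton, Submodule.mem_bot,
    Submodule.mem_annihilator_span_singleton]

end Aux

/-- for the dimension filtration `{D_i}` of a finitely generated module `M` over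
a Noetherian local ring, `Ass_R(D_i/D_{i-1}) = { 𝔭 ∈ Ass_R M : dim R/𝔭 = dim D_i }`. -/
theorem stmt4 {R : Type*} [CommRing R] [IsNoetherianRing R] [IsLocalRing R]
    {M : Type*} [AddCommGroup M] [Module R M] [Module.Finite R M] [Nontrivial M]
    (ℓ : ℕ) (D : ℕ → Submodule R M) (hD : IsDimFiltration ℓ D)
    (i : ℕ) (h1 : 1 ≤ i) (hℓ : i ≤ ℓ) :
    associatedPrimes R (subQuot (D (i - 1)) (D i))
      = {p | p ∈ associatedPrimes R M ∧ ringKrullDim (R ⧸ p) = dimMod R ↥(D i)} := by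
  obtain ⟨hD0, hDl, hchain, hdims, hmax⟩ := hD
  have hi1 : i - 1 + 1 = i := by omega
  have hiℓ : i - 1 < ℓ := by omega
  have hAB : D (i - 1) ≤ D i := by
    have := (hchain _ hiℓ).le; rwa [hi1] at this
  have hdimAB : dimMod R ↥(D (i - 1)) < dimMod R ↥(D i) := by
    have := hdims _ hiℓ; rwa [hi1] at this
  have hmaxB : ∀ L : Submodule R M, L ≤ D i → dimMod R ↥L < dimMod R ↥(D i) →
      L ≤ D (i - 1) := by
    have := hmax _ hiℓ; rwa [hi1] at this
  have hmono : ∀ a b : ℕ, a ≤ b → b ≤ ℓ → dimMod R ↥(D a) ≤ dimMod R ↥(D b) := by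
    intro a b hab hbl
    induction b with
    | zero =>
      obtain rfl : a = 0 := by omega
      exact le_rfl
    | succ n ih =>
      rcases Nat.lt_or_ge a (n + 1) with h | h
      · exact le_trans (ih (by omega) (by omega)) (hdims n (by omega)).le
      · obtain rfl : a = n + 1 := by omega
        exact le_rfl
  ext p
  simp only [Set.mem_setOf_eq, AssociatedPrimes.mem_iff, isAssociatedPrime_iff,
    colon_bot_singleton_eq]
  constructor
  · rintro ⟨hp, xq, rfl⟩
    obtain ⟨x, rfl⟩ := Submodule.Quotient.mk_surjective _ xq
    have hmem0 : ∀ r : R,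
        (r • (Submodule.Quotient.mk x : subQuot (D (i - 1)) (D i)) = 0) ↔
          r • (x : M) ∈ D (i - 1) := by
      intro r
      rw [← Submodule.Quotient.mk_smul, Submodule.Quotient.mk_eq_zero, Submodule.mem_comap]
      simp
    have hmem : ∀ r : R,
        r ∈ (R ∙ (Submodule.Quotient.mk x : subQuot (D (i - 1)) (D i))).annihilator ↔
          r • (x : M) ∈ D (i - 1) := by
      intro r
      rw [Submodule.mem_annihilator_span_singleton]
      exact hmem0 r
    have hann : (D i).annihilator ≤
        (R ∙ (Submodule.Quotient.mk x : subQuot (D (i - 1)) (D i))).annihilator := by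
      intro r hr
      rw [hmem r, Submodule.mem_annihilator.mp hr _ x.2]
      exact zero_mem _
    have hle : ringKrullDim
        (R ⧸ (R ∙ (Submodule.Quotient.mk x : subQuot (D (i - 1)) (D i))).annihilator)
          ≤ dimMod R ↥(D i) := krull_quot_mono hann
    have hLB : D (i - 1) ⊔ (R ∙ (x : M)) ≤ D i :=
      sup_le hAB ((Submodule.span_singleton_le_iff_mem _ _).mpr x.2)
    have hEq : ringKrullDim
        (R ⧸ (R ∙ (Submodule.Quotient.mk x : subQuot (D (i - 1)) (D i))).annihilator)
          = dimMod R ↥(D i) := by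
      by_contra hne
      have hlt := lt_of_le_of_ne hle hne
      have hdimL : dimMod R ↥(D (i - 1) ⊔ (R ∙ (x : M))) < dimMod R ↥(D i) :=
        lt_of_le_of_lt (dim_sup_le fun r hr => (hmem r).mp hr) (max_lt hdimAB hlt)
      have hxA : (x : M) ∈ D (i - 1) :=
        hmaxB _ hLB hdimL (Submodule.mem_sup_right (Submodule.mem_span_singleton_self _))
      have hone : (1 : R) ∈
          (R ∙ (Submodule.Quotient.mk x : subQuot (D (i - 1)) (D i))).annihilator := by
        rw [hmem 1, one_smul]; exact hxA
      exact hp.ne_top ((Ideal.eq_top_iff_one _).mpr hone)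
    refine ⟨⟨hp, ?_⟩, hEq⟩
    have hnotle : ¬ (D (i - 1)).annihilator ≤
        (R ∙ (Submodule.Quotient.mk x : subQuot (D (i - 1)) (D i))).annihilator := by
      intro hle2
      have := krull_quot_mono hle2
      rw [hEq] at this
      exact absurd (lt_of_le_of_lt this hdimAB) (lt_irrefl _)
    obtain ⟨a, haA, hap⟩ := SetLike.not_le_iff_exists.mp hnotle
    refine ⟨a • (x : M), ?_⟩
    ext r
    rw [Submodule.mem_annihilator_span_singleton, Submodule.mem_annihilator_span_singleton,
      hmem0 r]
    constructor
    · intro hr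
      rw [smul_comm]
      exact Submodule.mem_annihilator.mp haA _ hr
    · intro hr
      have hra : (r * a) • (x : M) = 0 := by rwa [mul_smul]
      have h2 : r * a ∈
          (R ∙ (Submodule.Quotient.mk x : subQuot (D (i - 1)) (D i))).annihilator := by
        rw [hmem, hra]; exact zero_mem _
      exact (hmem r).mp ((hp.mem_or_mem h2).resolve_right hap)
  · rintro ⟨⟨hp, x, rfl⟩, hdim⟩
    have hcontra : ∀ y : M, (R ∙ y).annihilator = (R ∙ x).annihilator →
        y ∉ D (i - 1) := by
      intro y hy hyA
      have hdy : dimMod R ↥(R ∙ y) ≤ dimMod R ↥(D (i - 1)) :=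
        dimMod_mono ((Submodule.span_singleton_le_iff_mem _ _).mpr hyA)
      rw [dimMod_submodule_eq, hy, hdim] at hdy
      exact absurd (lt_of_le_of_lt hdy hdimAB) (lt_irrefl _)
    have hxDi : x ∈ D i := by
      have key : ∀ n, ∀ j, i ≤ j → j ≤ ℓ → j ≤ i + n → x ∈ D j → x ∈ D i := by
        intro n
        induction n with
        | zero =>
          intro j hj1 hj2 hj3 hx
          obtain rfl : j = i := by omega
          exact hx
        | succ n ih =>
          intro j hj1 hj2 hj3 hx
          rcases eq_or_lt_of_le hj1 with h | h
          · rwa [← h] at hx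
          · have hj1' : j - 1 + 1 = j := by omega
            have hj1ℓ : j - 1 < ℓ := by omega
            have hsub : D (j - 1) ⊔ (R ∙ x) ≤ D j := by
              refine sup_le ?_ ((Submodule.span_singleton_le_iff_mem _ _).mpr hx)
              have := (hchain _ hj1ℓ).le; rwa [hj1'] at this
            have hdimj : dimMod R ↥(D (j - 1)) < dimMod R ↥(D j) := by
              have := hdims _ hj1ℓ; rwa [hj1'] at this
            have hpj : ringKrullDim (R ⧸ (R ∙ x).annihilator) < dimMod R ↥(D j) := by
              rw [hdim]
              exact lt_of_le_of_lt (hmono i (j - 1) (by omega) (by omega)) hdimj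
            have hdimL : dimMod R ↥(D (j - 1) ⊔ (R ∙ x)) < dimMod R ↥(D j) := by
              refine lt_of_le_of_lt (dim_sup_le fun r hr => ?_) (max_lt hdimj hpj)
              have h0 : r • x = 0 := (Submodule.mem_annihilator_span_singleton _ _).mp hr
              rw [h0]
              exact zero_mem _
            have hLA : D (j - 1) ⊔ (R ∙ x) ≤ D (j - 1) :=
              hmax (j - 1) hj1ℓ _ (by rw [hj1']; exact hsub) (by rw [hj1']; exact hdimL)
            exact ih (j - 1) (by omega) (by omega) (by omega)
              (hLA (Submodule.mem_sup_right (Submodule.mem_span_singleton_self _)))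
      exact key ℓ ℓ hℓ le_rfl (by omega) (by rw [hDl]; exact Submodule.mem_top)
    refine ⟨hp, Submodule.Quotient.mk (⟨x, hxDi⟩ : ↥(D i)), ?_⟩
    have hq : ∀ r : R,
        (r • (Submodule.Quotient.mk (⟨x, hxDi⟩ : ↥(D i)) : subQuot (D (i - 1)) (D i)) = 0) ↔
          r • x ∈ D (i - 1) := by
      intro r
      rw [← Submodule.Quotient.mk_smul, Submodule.Quotient.mk_eq_zero, Submodule.mem_comap]
      simp
    ext r
    rw [Submodule.mem_annihilator_span_singleton, Submodule.mem_annihilator_span_singleton,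
      hq r]
    constructor
    · intro h
      rw [h]
      exact zero_mem _
    · intro hr
      by_contra hrx
      refine hcontra (r • x) ?_ hr
      ext s
      rw [Submodule.mem_annihilator_span_singleton, Submodule.mem_annihilator_span_singleton]
      constructor
      · intro hsr
        have h2 : (s * r) • x = 0 := by rwa [mul_smul]
        have h3 : s * r ∈ (R ∙ x).annihilator :=
          (Submodule.mem_annihilator_span_singleton _ _).mpr h2
        rcases hp.mem_or_mem h3 with h4 | h4
        · exact (Submodule.mem_annihilator_span_singleton _ _).mp h4
        · exact absurd ((Submodule.mem_annihilator_span_singleton _ _).mp h4) hrx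
      · intro hs
        rw [smul_comm, hs, smul_zero]
end

section
/- Let (R, 𝔪) be a Noetherian local ring, M a finitely generated R-module with dimension filtration {D_i}. Then distinguished systems of parameters of M exist, and if x₁,…,x_d is a distinguished system of parameters of M, then so is x₁^{n₁},…,x_d^{n_d} for any positive integers n₁,…,n_d. -/
open IsLocalRing

/-- A distinguished system of parameters: a system of parameters `x₁,…,x_d` of `M` such that
`(x_j : dim D_i < j ≤ d) • D_i = 0` for all `i`. -/
def IsDistinguishedSOP {R M : Type*} [CommRing R] [IsLocalRing R] [AddCommGroup M] [Module R M]
    (ℓ d : ℕ) (D : ℕ → Submodule R M) (x : Fin d → R) : Prop :=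
  (∀ i, x i ∈ maximalIdeal R) ∧
  IsFiniteLength R (M ⧸ (Ideal.span (Set.range x) • ⊤ : Submodule R M)) ∧
  (∀ (i : ℕ) (_ : 1 ≤ i) (_ : i ≤ ℓ) (di : ℕ), dimMod R ↥(D i) = di →
    ∀ j : Fin d, di ≤ (j : ℕ) → ∀ m ∈ D i, x j • m = 0)


section Aux

variable {R : Type*} [CommRing R]

lemma myIsArtinian_of_quot_scalars (K : Ideal R) {M : Type*} [AddCommGroup M] [Module R M]
    [Module (R ⧸ K) M] [IsScalarTower R (R ⧸ K) M] (h : IsArtinian (R ⧸ K) M) :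
    IsArtinian R M := by
  have key : ∀ (N : Submodule R M) (c : R ⧸ K) (m : M), m ∈ N → c • m ∈ N := by
    intro N c m hm
    obtain ⟨r, rfl⟩ := Ideal.Quotient.mk_surjective c
    have h1 : (Ideal.Quotient.mk K r) • m = r • m := by
      rw [← Ideal.Quotient.algebraMap_eq, algebraMap_smul]
    rw [h1]; exact N.smul_mem r hm
  let g : Submodule R M ↪o Submodule (R ⧸ K) M :=
    { toFun := fun N =>
        { carrier := N
          add_mem' := fun ha hb => N.add_mem ha hb
          zero_mem' := N.zero_mem
          smul_mem' := fun c m hm => key N c m hm }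
      inj' := fun N N' h' => by
        have h2 := congrArg (fun (t : Submodule (R ⧸ K) M) => (t : Set M)) h'
        exact SetLike.coe_injective h2
      map_rel_iff' := Iff.rfl }
  exact (isArtinian_iff R M).mpr (g.ltEmbedding.wellFounded h.wf)

lemma myIsArtinian_of_pow_le_ann [IsNoetherianRing R] [IsLocalRing R] :
    ∀ (n : ℕ) (M : Type*) [AddCommGroup M] [Module R M] [Module.Finite R M],
      maximalIdeal R ^ n ≤ Module.annihilator R M → IsArtinian R M := by
  intro n
  induction n with
  | zero =>
    intro M _ _ _ hn
    have h1 : (1 : R) ∈ Module.annihilator R M := hn (by simp)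
    have : Subsingleton M :=
      ⟨fun a b => by
        have ha := Module.mem_annihilator.mp h1 a
        have hb := Module.mem_annihilator.mp h1 b
        rw [one_smul] at ha hb
        rw [ha, hb]⟩
    exact isArtinian_of_finite
  | succ n ih =>
    intro M _ _ _ hn
    set S : Submodule R M := (maximalIdeal R ^ n) • ⊤ with hS
    haveI hq : IsArtinian R (M ⧸ S) := by
      apply ih
      intro r hr
      rw [Module.mem_annihilator]
      intro m
      obtain ⟨m, rfl⟩ := Submodule.mkQ_surjective S m
      rw [← map_smul, Submodule.mkQ_apply, Submodule.Quotient.mk_eq_zero]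
      exact Submodule.smul_mem_smul hr trivial
    have htor : Module.IsTorsionBySet R S ((maximalIdeal R : Ideal R) : Set R) := by
      intro s c
      apply Subtype.ext
      have h1 : (c : R) • (s : M) ∈ (maximalIdeal R ^ (n+1)) • (⊤ : Submodule R M) := by
        rw [pow_succ, mul_comm, ← Ideal.smul_eq_mul, Submodule.smul_assoc]
        exact Submodule.smul_mem_smul c.2 s.2
      have h2 : (maximalIdeal R ^ (n+1)) • (⊤ : Submodule R M) ≤ ⊥ := by
        refine Submodule.smul_le.mpr fun r hr m _ => ?_
        exact Module.mem_annihilator.mp (hn hr) m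
      have h3 := h2 h1
      simpa using h3
    letI := htor.module
    haveI : IsScalarTower R (R ⧸ maximalIdeal R) S := htor.isScalarTower
    haveI : Module.Finite R S := Module.Finite.iff_fg.mpr (IsNoetherian.noetherian S)
    haveI : Module.Finite (R ⧸ maximalIdeal R) S :=
      Module.Finite.of_restrictScalars_finite R _ _
    haveI : IsArtinianRing (R ⧸ maximalIdeal R) := by
      have hf : IsField (R ⧸ maximalIdeal R) :=
        (Ideal.Quotient.maximal_ideal_iff_isField_quotient _).mp (maximalIdeal.isMaximal R)
      haveI : Nontrivial (R ⧸ maximalIdeal R) := ⟨hf.exists_pair_ne⟩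
      have halt : ∀ I : Ideal (R ⧸ maximalIdeal R), I = ⊥ ∨ I = ⊤ := by
        intro I
        rcases eq_or_ne I ⊥ with h | h
        · exact Or.inl h
        · obtain ⟨x, hxI, hx0⟩ := Submodule.exists_mem_ne_zero_of_ne_bot h
          obtain ⟨y, hxy⟩ := hf.mul_inv_cancel hx0
          exact Or.inr (Ideal.eq_top_of_isUnit_mem I hxI (IsUnit.of_mul_eq_one y hxy))
      haveI : Finite (Ideal (R ⧸ maximalIdeal R)) := by
        apply Finite.of_injective (fun I : Ideal (R ⧸ maximalIdeal R) => (I = ⊤ : Prop))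
        intro a b hab
        rcases halt a with ha | ha <;> rcases halt b with hb | hb <;>
          subst ha <;> subst hb <;> simp_all
      exact ⟨Finite.wellFounded_of_trans_of_irrefl _⟩
    haveI : IsArtinian (R ⧸ maximalIdeal R) S := isArtinian_of_fg_of_artinian'
    haveI hart : IsArtinian R S := myIsArtinian_of_quot_scalars (maximalIdeal R) ‹_›
    exact isArtinian_of_range_eq_ker S.subtype S.mkQ
      (by rw [Submodule.range_subtype, Submodule.ker_mkQ])

lemma myIsFiniteLength_of_pow_le_ann [IsNoetherianRing R] [IsLocalRing R]
    (M : Type*) [AddCommGroup M] [Module R M] [Module.Finite R M] (n : ℕ)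
    (hn : maximalIdeal R ^ n ≤ Module.annihilator R M) : IsFiniteLength R M := by
  rw [isFiniteLength_iff_isNoetherian_isArtinian]
  exact ⟨inferInstance, myIsArtinian_of_pow_le_ann n M hn⟩

lemma myIsFiniteLength_of_primes [IsNoetherianRing R] [IsLocalRing R]
    (M : Type*) [AddCommGroup M] [Module R M] [Module.Finite R M]
    (hp : ∀ p : Ideal R, p.IsPrime → Module.annihilator R M ≤ p → p = maximalIdeal R) :
    IsFiniteLength R M := by
  have hrad : maximalIdeal R ≤ (Module.annihilator R M).radical := by
    rw [Ideal.radical_eq_sInf]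
    exact le_sInf fun p hp' => (hp p hp'.2 hp'.1) ▸ le_rfl
  obtain ⟨n, hn⟩ := Ideal.exists_pow_le_of_le_radical_of_fg hrad (IsNoetherian.noetherian _)
  exact myIsFiniteLength_of_pow_le_ann M n hn

lemma myCoheight_le_of_quot_le {A p : Ideal R} (hp : p.IsPrime) (hA : A ≤ p)
    {n : ℕ} (h : ringKrullDim (R ⧸ A) ≤ (n : WithBot ℕ∞)) :
    Order.coheight (⟨p, hp⟩ : PrimeSpectrum R) ≤ (n : ℕ∞) := by
  apply Order.coheight_le
  intro P hhead
  have hAi : ∀ i, A ≤ (P i).asIdeal := by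
    intro i
    refine hA.trans ?_
    have h1 : P.head ≤ P i := P.monotone (Fin.zero_le i)
    rw [hhead] at h1
    exact (PrimeSpectrum.asIdeal_le_asIdeal _ _).mpr h1
  let Q : LTSeries (PrimeSpectrum (R ⧸ A)) :=
    { length := P.length
      toFun := fun i => ⟨((P i).asIdeal).map (Ideal.Quotient.mk A),
        Ideal.map_isPrime_of_surjective Ideal.Quotient.mk_surjective (by
          rw [Ideal.mk_ker]; exact hAi i)⟩
      step := fun i => by
        have h1 : (P i.castSucc) < (P i.succ) := P.step i
        show (_ : PrimeSpectrum (R ⧸ A)) < _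
        rw [← PrimeSpectrum.asIdeal_lt_asIdeal] at h1 ⊢
        refine lt_of_le_of_ne (Ideal.map_mono h1.le) (fun he => ?_)
        have h3 := congrArg (Ideal.comap (Ideal.Quotient.mk A)) he
        rw [Ideal.comap_map_of_surjective _ Ideal.Quotient.mk_surjective,
            Ideal.comap_map_of_surjective _ Ideal.Quotient.mk_surjective,
            ← RingHom.ker_eq_comap_bot, Ideal.mk_ker,
            sup_eq_left.mpr (hAi _), sup_eq_left.mpr (hAi _)] at h3
        exact h1.ne h3 }
  have h4 := Order.LTSeries.length_le_krullDim Q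
  have h6 : Order.krullDim (PrimeSpectrum (R ⧸ A)) ≤ ((n : ℕ∞) : WithBot ℕ∞) := by
    exact_mod_cast h
  have h5 : ((P.length : ℕ∞) : WithBot ℕ∞) ≤ ((n : ℕ∞) : WithBot ℕ∞) := by
    refine le_trans ?_ (le_trans h4 h6)
    norm_cast
  exact_mod_cast h5

lemma myEq_maximalIdeal_of_coheight_le_zero [IsLocalRing R] {p : Ideal R} (hp : p.IsPrime)
    (h : Order.coheight (⟨p, hp⟩ : PrimeSpectrum R) ≤ 0) : p = maximalIdeal R := by
  by_contra hne
  have hlt : (⟨p, hp⟩ : PrimeSpectrum R) < ⟨maximalIdeal R, inferInstance⟩ := by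
    rw [← PrimeSpectrum.asIdeal_lt_asIdeal]
    exact lt_of_le_of_ne (le_maximalIdeal hp.ne_top) hne
  have h0 : Order.coheight (⟨p, hp⟩ : PrimeSpectrum R) = 0 := le_antisymm h zero_le
  exact hlt.not_ge ((Order.coheight_eq_zero.mp h0) hlt.le)

lemma myCoheight_maximalIdeal [IsLocalRing R] :
    Order.coheight (⟨maximalIdeal R, inferInstance⟩ : PrimeSpectrum R) = 0 := by
  rw [Order.coheight_eq_zero]
  intro b hb
  have h1 : (maximalIdeal R) ≤ b.asIdeal := (PrimeSpectrum.asIdeal_le_asIdeal _ _).mpr hb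
  have h2 : b.asIdeal = maximalIdeal R :=
    ((maximalIdeal.isMaximal R).eq_of_le b.2.ne_top h1).symm
  rw [← PrimeSpectrum.asIdeal_le_asIdeal, h2]

end Aux

/-- distinguished systems of parameters of `M` exist, and if `x₁,…,x_d` is a
distinguished system of parameters then so is `x₁^{n₁},…,x_d^{n_d}` for all positive
exponents `n₁,…,n_d`. -/
theorem stmt17 {R : Type*} [CommRing R] [IsNoetherianRing R] [IsLocalRing R]
    {M : Type*} [AddCommGroup M] [Module R M] [Module.Finite R M] [Nontrivial M]
    (d : ℕ) (hd : 1 ≤ d) (hdim : dimMod R M = d)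
    (ℓ : ℕ) (D : ℕ → Submodule R M) (hD : IsDimFiltration ℓ D) :
    (∃ x : Fin d → R, IsDistinguishedSOP ℓ d D x) ∧
    (∀ x : Fin d → R, IsDistinguishedSOP ℓ d D x →
      ∀ e : Fin d → ℕ, (∀ j, 1 ≤ e j) →
        IsDistinguishedSOP ℓ d D (fun j => x j ^ e j)) := by
  classical
  obtain ⟨hD0, hDl, hmono, hdlt, hmax⟩ := hD
  -- monotonicity of the filtration
  have hDle : ∀ i' ≤ ℓ, ∀ i ≤ i', D i ≤ D i' := by
    intro i'
    induction i' with
    | zero => intro _ i hi; rw [Nat.le_zero.mp hi]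
    | succ k ih =>
      intro hk i hi
      rcases eq_or_lt_of_le hi with rfl | hi'
      · exact le_rfl
      · exact (ih (by omega) i (by omega)).trans (hmono k (by omega)).le
  -- dimension of the zero submodule
  have hbot : dimMod R ↥(D 0) = ⊥ := by
    rw [hD0]
    show ringKrullDim _ = ⊥
    rw [show Module.annihilator R ↥(⊥ : Submodule R M) = ⊤ from Submodule.annihilator_bot]
    have hsub : Subsingleton (R ⧸ (⊤ : Ideal R)) := by
      constructor
      intro a b
      obtain ⟨a, rfl⟩ := Ideal.Quotient.mk_surjective a
      obtain ⟨b, rfl⟩ := Ideal.Quotient.mk_surjective b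
      exact Ideal.Quotient.eq.mpr trivial
    exact ringKrullDim_eq_bot_of_subsingleton
  -- the maximal index with small dimension
  let imax : ℕ → ℕ := fun j => Nat.findGreatest (fun i => dimMod R ↥(D i) ≤ (j : ℕ)) ℓ
  have himaxle : ∀ j, imax j ≤ ℓ := fun j => Nat.findGreatest_le ℓ
  have hspec : ∀ j : ℕ, dimMod R ↥(D (imax j)) ≤ ((j : ℕ) : WithBot ℕ∞) := fun j =>
    Nat.findGreatest_spec (P := fun i => dimMod R ↥(D i) ≤ (j : ℕ)) (Nat.zero_le ℓ)
      (by show dimMod R ↥(D 0) ≤ ((j : ℕ) : WithBot ℕ∞); rw [hbot]; exact bot_le)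
  have hgest : ∀ j i, i ≤ ℓ → dimMod R ↥(D i) ≤ ((j : ℕ) : WithBot ℕ∞) → i ≤ imax j :=
    fun j i h1 h2 => Nat.le_findGreatest h1 h2
  -- key existence claim, by downward recursion choosing the parameters from the top
  have key : ∀ n : ℕ, n ≤ d → ∃ y : Fin d → R,
      (∀ k, y k ∈ maximalIdeal R) ∧
      (∀ k : Fin d, ∀ m ∈ D (imax (k : ℕ)), y k • m = 0) ∧
      (∀ (p : Ideal R) (hp : p.IsPrime), Module.annihilator R M ≤ p →
        (∀ k : Fin d, d - n ≤ (k : ℕ) → y k ∈ p) →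
        Order.coheight (⟨p, hp⟩ : PrimeSpectrum R) ≤ ((d - n : ℕ) : ℕ∞)) := by
    intro n
    induction n with
    | zero =>
      intro _
      refine ⟨fun _ => 0, fun k => (maximalIdeal R).zero_mem,
        fun k m _ => zero_smul R m, ?_⟩
      intro p hp hple _
      refine myCoheight_le_of_quot_le hp hple ?_
      rw [Nat.sub_zero]
      exact le_of_eq hdim
    | succ n ih =>
      intro hn1
      obtain ⟨y, hy1, hy2, hy3⟩ := ih (by omega)
      set j : ℕ := d - (n + 1) with hj
      have hjd : j < d := by omega
      have hdn : d - n = j + 1 := by omega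
      set C : Ideal R :=
        Module.annihilator R M ⊔ Ideal.span (y '' {k : Fin d | j + 1 ≤ (k : ℕ)}) with hC
      have hCprime : ∀ (q : Ideal R) (hq : q.IsPrime), C ≤ q →
          Order.coheight (⟨q, hq⟩ : PrimeSpectrum R) ≤ ((j + 1 : ℕ) : ℕ∞) := by
        intro q hq hCq
        have h1 : Module.annihilator R M ≤ q := le_trans le_sup_left hCq
        have h2 : ∀ k : Fin d, d - n ≤ (k : ℕ) → y k ∈ q := by
          intro k hk
          have hmem : y k ∈ Ideal.span (y '' {k : Fin d | j + 1 ≤ (k : ℕ)}) :=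
            Ideal.subset_span ⟨k, by simpa using (by omega : j + 1 ≤ (k : ℕ)), rfl⟩
          exact hCq (le_sup_right (α := Ideal R) hmem)
        have h3 := hy3 q hq h1 h2
        rwa [hdn] at h3
      -- the finitely many bad primes
      set S : Set (Ideal R) :=
        {q | q ∈ C.minimalPrimes ∧ ∃ hq : q.IsPrime,
          ¬ Order.coheight (⟨q, hq⟩ : PrimeSpectrum R) ≤ ((j : ℕ) : ℕ∞)} with hSdef
      have hSfin : S.Finite := by
        refine Set.Finite.subset ?_ (fun q hq => hq.1)
        rw [Ideal.minimalPrimes_eq_comap]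
        exact (minimalPrimes.finite_of_isNoetherianRing (R ⧸ C)).image _
      -- prime avoidance
      have havoid : ∃ v, v ∈ (D (imax j)).annihilator ⊓ maximalIdeal R ∧ ∀ q ∈ S, v ∉ q := by
        by_contra hcon
        push_neg at hcon
        have hsub : (((D (imax j)).annihilator ⊓ maximalIdeal R : Ideal R) : Set R) ⊆
            ⋃ q ∈ hSfin.toFinset, (id q : Ideal R) := by
          intro v hv
          obtain ⟨q, hqS, hvq⟩ := hcon v hv
          exact Set.mem_biUnion (hSfin.mem_toFinset.mpr hqS) hvq
        obtain ⟨q, hqmem, hle⟩ := (Ideal.subset_union_prime (f := id) C C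
          (fun i hi _ _ => (hSfin.mem_toFinset.mp hi).1.1.1)).mp hsub
        replace hqmem := hSfin.mem_toFinset.mp hqmem
        obtain ⟨hqmin, hq', hqnot⟩ := hqmem
        have hann_not : ¬ (D (imax j)).annihilator ≤ q := by
          intro hle'
          exact hqnot (myCoheight_le_of_quot_le hq' hle' (hspec j))
        have hm_not : ¬ maximalIdeal R ≤ q := by
          intro hle'
          have hqm : q = maximalIdeal R :=
            ((maximalIdeal.isMaximal R).eq_of_le hq'.ne_top hle').symm
          apply hqnot
          have he : (⟨q, hq'⟩ : PrimeSpectrum R)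
              = ⟨maximalIdeal R, (maximalIdeal.isMaximal R).isPrime⟩ :=
            PrimeSpectrum.ext hqm
          rw [he, myCoheight_maximalIdeal]
          exact zero_le
        obtain ⟨a, ha, hanq⟩ := SetLike.not_le_iff_exists.mp hann_not
        obtain ⟨m, hm, hmnq⟩ := SetLike.not_le_iff_exists.mp hm_not
        have hprod : a * m ∈ (D (imax j)).annihilator ⊓ maximalIdeal R :=
          ⟨Ideal.mul_mem_right m _ ha, Ideal.mul_mem_left _ a hm⟩
        rcases hq'.mem_or_mem (hle hprod) with h | h
        exacts [hanq h, hmnq h]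
      obtain ⟨v, hvA, hvS⟩ := havoid
      refine ⟨Function.update y ⟨j, hjd⟩ v, ?_, ?_, ?_⟩
      · intro k
        rcases eq_or_ne k ⟨j, hjd⟩ with rfl | hne
        · rw [Function.update_self]; exact hvA.2
        · rw [Function.update_of_ne hne]; exact hy1 k
      · intro k m hm
        rcases eq_or_ne k ⟨j, hjd⟩ with rfl | hne
        · rw [Function.update_self]
          exact Submodule.mem_annihilator.mp hvA.1 m hm
        · rw [Function.update_of_ne hne]; exact hy2 k m hm
      · intro p hp hple hyp
        have hCp : C ≤ p := by
          refine sup_le hple ?_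
          rw [Ideal.span_le]
          rintro _ ⟨k, hk, rfl⟩
          have hk' : j + 1 ≤ (k : ℕ) := by simpa using hk
          have hkne : k ≠ ⟨j, hjd⟩ := by
            intro h
            rw [h] at hk'
            simp at hk'
          have hmem := hyp k (by omega)
          rwa [Function.update_of_ne hkne] at hmem
        have hp1 : Order.coheight (⟨p, hp⟩ : PrimeSpectrum R) ≤ ((j + 1 : ℕ) : ℕ∞) :=
          hCprime p hp hCp
        by_contra hcon
        haveI := hp
        obtain ⟨q, hqmin, hqle⟩ := Ideal.exists_minimalPrimes_le hCp
        have hq' : q.IsPrime := hqmin.1.1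
        have hqc : Order.coheight (⟨q, hq'⟩ : PrimeSpectrum R) ≤ ((j + 1 : ℕ) : ℕ∞) :=
          hCprime q hq' hqmin.1.2
        have hqle' : (⟨q, hq'⟩ : PrimeSpectrum R) ≤ ⟨p, hp⟩ :=
          (PrimeSpectrum.asIdeal_le_asIdeal _ _).mp hqle
        have hqS : q ∈ S := by
          refine ⟨hqmin, hq', ?_⟩
          intro hle'
          exact hcon (le_trans (Order.coheight_anti hqle') hle')
        rcases eq_or_ne q p with rfl | hne
        · have hvp : v ∈ q := by
            have hmem := hyp ⟨j, hjd⟩ (by simp [hj])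
            rwa [Function.update_self] at hmem
          exact hvS q hqS hvp
        · have hqp : (⟨q, hq'⟩ : PrimeSpectrum R) < ⟨p, hp⟩ := by
            rw [← PrimeSpectrum.asIdeal_lt_asIdeal]
            exact lt_of_le_of_ne hqle hne
          have hfin : Order.coheight (⟨p, hp⟩ : PrimeSpectrum R) < ⊤ :=
            lt_of_le_of_lt hp1 (by exact_mod_cast WithTop.coe_lt_top (j + 1 : ℕ))
          have hstrict := Order.coheight_strictAnti hqp hfin
          have h1 : ((j : ℕ) : ℕ∞) < Order.coheight (⟨p, hp⟩ : PrimeSpectrum R) :=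
            not_le.mp hcon
          have h2 : ((j : ℕ) : ℕ∞) + 1 ≤ Order.coheight (⟨p, hp⟩ : PrimeSpectrum R) :=
            (ENat.add_one_le_iff (by simp)).mpr h1
          have h3 : ((j + 1 : ℕ) : ℕ∞) < Order.coheight (⟨q, hq'⟩ : PrimeSpectrum R) := by
            push_cast
            exact lt_of_le_of_lt h2 hstrict
          exact absurd hqc (not_le.mpr h3)
  -- part 1: existence
  obtain ⟨x, hx1, hx2, hx3⟩ := key d le_rfl
  have hannq : ∀ (I : Ideal R), (∀ r ∈ I, ∀ m : M, r • m ∈ (I • ⊤ : Submodule R M)) := by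
    intro I r hr m
    exact Submodule.smul_mem_smul hr trivial
  have hsop : IsDistinguishedSOP ℓ d D x := by
    refine ⟨hx1, ?_, ?_⟩
    · set I : Ideal R := Ideal.span (Set.range x) with hI
      haveI : Module.Finite R (M ⧸ (I • ⊤ : Submodule R M)) :=
        Module.Finite.of_surjective (I • ⊤ : Submodule R M).mkQ
          (Submodule.mkQ_surjective _)
      apply myIsFiniteLength_of_primes
      intro p hp hple
      have h1 : Module.annihilator R M ≤ p :=
        le_trans (LinearMap.annihilator_le_of_surjective
          (I • ⊤ : Submodule R M).mkQ (Submodule.mkQ_surjective _)) hple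
      have h2 : ∀ k : Fin d, d - d ≤ (k : ℕ) → x k ∈ p := by
        intro k _
        apply hple
        rw [Module.mem_annihilator]
        intro mq
        obtain ⟨m, rfl⟩ := Submodule.mkQ_surjective _ mq
        rw [← map_smul, Submodule.mkQ_apply, Submodule.Quotient.mk_eq_zero]
        exact Submodule.smul_mem_smul (Ideal.subset_span ⟨k, rfl⟩) trivial
      have h3 := hx3 p hp h1 h2
      apply myEq_maximalIdeal_of_coheight_le_zero hp
      simpa using h3
    · intro i hi1 hi2 di hdi jj hdij m hm
      have hiim : i ≤ imax (jj : ℕ) := by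
        refine hgest _ i hi2 ?_
        rw [hdi]
        exact_mod_cast Nat.cast_le.mpr hdij
      exact hx2 jj m (hDle (imax (jj : ℕ)) (himaxle _) i hiim hm)
  refine ⟨⟨x, hsop⟩, ?_⟩
  -- part 2: powers
  rintro z ⟨hz1, hz2, hz3⟩ e he
  refine ⟨fun k => Ideal.pow_mem_of_mem _ (hz1 k) _ (he k), ?_, ?_⟩
  · set I : Ideal R := Ideal.span (Set.range z) with hI
    set J : Ideal R := Ideal.span (Set.range fun k => z k ^ e k) with hJ
    haveI hart : IsArtinian R (M ⧸ (I • ⊤ : Submodule R M)) :=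
      (isFiniteLength_iff_isNoetherian_isArtinian.mp hz2).2
    haveI : Module.Finite R (M ⧸ (I • ⊤ : Submodule R M)) :=
      Module.Finite.of_surjective (I • ⊤ : Submodule R M).mkQ (Submodule.mkQ_surjective _)
    have hmonot : Monotone (fun n : ℕ =>
        OrderDual.toDual ((maximalIdeal R ^ n • ⊤ : Submodule R (M ⧸ (I • ⊤ : Submodule R M))))) := by
      intro a b hab
      exact Submodule.smul_mono (Ideal.pow_le_pow_right hab) le_rfl
    obtain ⟨n, hstab⟩ := IsArtinian.monotone_stabilizes ⟨_, hmonot⟩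
    have hbotq : (maximalIdeal R ^ n • ⊤ : Submodule R (M ⧸ (I • ⊤ : Submodule R M))) = ⊥ := by
      refine Submodule.eq_bot_of_le_smul_of_le_jacobson_bot (maximalIdeal R) _
        (IsNoetherian.noetherian _) ?_ ?_
      · have heq := hstab (n + 1) (by omega)
        have heq' : (maximalIdeal R ^ n • ⊤ : Submodule R (M ⧸ (I • ⊤ : Submodule R M)))
            = maximalIdeal R ^ (n + 1) • ⊤ := congrArg OrderDual.ofDual heq
        have h2 : maximalIdeal R • (maximalIdeal R ^ n • ⊤ : Submodule R (M ⧸ (I • ⊤ : Submodule R M)))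
            = maximalIdeal R ^ (n + 1) • ⊤ := by
          rw [pow_succ, mul_comm, ← Ideal.smul_eq_mul, Submodule.smul_assoc]
        rw [h2]
        exact le_of_eq heq'
      · exact (IsLocalRing.jacobson_eq_maximalIdeal ⊥ bot_ne_top).ge
    have hmann : (maximalIdeal R ^ n • ⊤ : Submodule R M) ≤ I • ⊤ := by
      intro w hw
      have hmem : Submodule.Quotient.mk (p := (I • ⊤ : Submodule R M)) w ∈
          (maximalIdeal R ^ n • ⊤ : Submodule R (M ⧸ (I • ⊤ : Submodule R M))) := by
        have := Submodule.mem_map_of_mem (f := (I • ⊤ : Submodule R M).mkQ) hw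
        rw [Submodule.map_smul''] at this
        exact Submodule.smul_mono le_rfl le_top this
      rw [hbotq] at hmem
      rwa [Submodule.mem_bot, Submodule.Quotient.mk_eq_zero] at hmem
    have hIrad : I ≤ J.radical := by
      rw [hI, Ideal.span_le]
      rintro _ ⟨k, rfl⟩
      exact ⟨e k, Ideal.subset_span ⟨k, rfl⟩⟩
    obtain ⟨s, hs⟩ := Ideal.exists_pow_le_of_le_radical_of_fg hIrad (IsNoetherian.noetherian I)
    have hpow : ∀ t : ℕ, ((maximalIdeal R ^ n) ^ t • ⊤ : Submodule R M) ≤ I ^ t • ⊤ := by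
      intro t
      induction t with
      | zero => simp
      | succ t iht =>
        calc ((maximalIdeal R ^ n) ^ (t + 1) • ⊤ : Submodule R M)
            = (maximalIdeal R ^ n) ^ t • (maximalIdeal R ^ n • ⊤ : Submodule R M) := by
              rw [pow_succ, ← Ideal.smul_eq_mul, Submodule.smul_assoc]
          _ ≤ (maximalIdeal R ^ n) ^ t • (I • ⊤ : Submodule R M) :=
              Submodule.smul_mono le_rfl hmann
          _ = I • ((maximalIdeal R ^ n) ^ t • ⊤ : Submodule R M) := by
              rw [← Submodule.smul_assoc, ← Submodule.smul_assoc, Ideal.smul_eq_mul,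
                Ideal.smul_eq_mul, mul_comm]
          _ ≤ I • (I ^ t • ⊤ : Submodule R M) := Submodule.smul_mono le_rfl iht
          _ = I ^ (t + 1) • ⊤ := by
              rw [← Submodule.smul_assoc, Ideal.smul_eq_mul, mul_comm, ← pow_succ]
    haveI : Module.Finite R (M ⧸ (J • ⊤ : Submodule R M)) :=
      Module.Finite.of_surjective (J • ⊤ : Submodule R M).mkQ (Submodule.mkQ_surjective _)
    apply myIsFiniteLength_of_pow_le_ann _ (n * s)
    intro r hr
    rw [Module.mem_annihilator]
    intro mq
    obtain ⟨m, rfl⟩ := Submodule.mkQ_surjective _ mq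
    rw [← map_smul, Submodule.mkQ_apply, Submodule.Quotient.mk_eq_zero]
    have hrm : r • m ∈ ((maximalIdeal R ^ n) ^ s • ⊤ : Submodule R M) := by
      refine Submodule.smul_mem_smul ?_ trivial
      rwa [← pow_mul]
    exact (le_trans (hpow s) (Submodule.smul_mono hs le_rfl)) hrm
  · intro i hi1 hi2 di hdi jj hdij m hm
    have h0 := hz3 i hi1 hi2 di hdi jj hdij m hm
    obtain ⟨t, ht⟩ := Nat.exists_eq_add_of_le (he jj)
    show z jj ^ e jj • m = 0
    rw [ht, add_comm 1 t, pow_succ, mul_smul, h0, smul_zero]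
end
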